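/- arXiv:1404.3600 — 7 statements merged into one kernel-verified Lean document; each statement's English description precedes it below -/
import Mathlib

section
/- For every integer n > 2 and every pair (α, β) of n-bit integers, a single query to the function x ↦ (α ∔ x) ⊕ (β ∔ x) cannot determine x modulo 2^(n-1): there exist n-bit integers x and x' with x mod 2^(n-1) ≠ x' mod 2^(n-1) such that (α ∔ x) ⊕ (β ∔ x) = (α ∔ x') ⊕ (β ∔ x'). -/
/-!
Complementing `n`-bit numbers, `t ↦ 2^n - 1 - t`, does not change their XOR. If
`α + β + x + x' + 1 ≡ 0 (mod 2^n)`, then `α ∔ x'` and `β ∔ x'` are the complements of `β ∔ x`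
and `α ∔ x`, so `x` and `x'` give the same answer to the query. Since `x' ≡ -(α + β + 1) - x`,
the two agree modulo `2^(n-1)` only if `2^(n-1) ∣ 2x + α + β + 1`, and as `2^(n-1) > 2` this
fails for `x = 0` or for `x = 1`.
-/

theorem Nat.two_pow_sub_succ_xor_two_pow_sub_succ {n a b : ℕ} (ha : a < 2 ^ n)
    (hb : b < 2 ^ n) : (2 ^ n - (a + 1)) ^^^ (2 ^ n - (b + 1)) = a ^^^ b := by
  apply Nat.eq_of_testBit_eq
  intro i
  rw [Nat.testBit_xor, Nat.testBit_xor, Nat.testBit_two_pow_sub_succ ha,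
    Nat.testBit_two_pow_sub_succ hb]
  by_cases hi : i < n
  · simp [hi]
  · have hn : 2 ^ n ≤ 2 ^ i := Nat.pow_le_pow_right two_pos (not_lt.mp hi)
    simp [hi, Nat.testBit_lt_two_pow (ha.trans_le hn), Nat.testBit_lt_two_pow (hb.trans_le hn)]

theorem Nat.mod_eq_sub_succ_mod_of_dvd {N s t : ℕ} (hN : 0 < N) (h : N ∣ s + t + 1) :
    s % N = N - (t % N + 1) := by
  have hdvd : N ∣ s % N + t % N + 1 :=
    Nat.modEq_zero_iff_dvd.mp <|
      (((Nat.mod_modEq s N).add (Nat.mod_modEq t N)).add_right 1).trans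
        (Nat.modEq_zero_iff_dvd.mpr h)
  have hlt : s % N + t % N + 1 < 2 * N := by
    have := Nat.mod_lt s hN
    have := Nat.mod_lt t hN
    omega
  have := Nat.eq_of_dvd_of_lt_two_mul (Nat.succ_ne_zero _) hdvd hlt
  omega

theorem Nat.exists_lt_dvd_add (N c : ℕ) [NeZero N] : ∃ x < N, N ∣ c + x := by
  refine ⟨(-(c : ZMod N)).val, ZMod.val_lt _, ?_⟩
  rw [← ZMod.natCast_eq_zero_iff, Nat.cast_add, ZMod.natCast_zmod_val, add_neg_cancel]

theorem Nat.exists_lt_two_not_dvd_two_mul_add {M : ℕ} (hM : 2 < M) (c : ℕ) :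
    ∃ x < 2, ¬ M ∣ 2 * x + c := by
  by_contra! h
  have h2 : M ∣ 2 :=
    (Nat.dvd_add_left (by simpa using h 0 two_pos)).mp (by simpa using h 1 one_lt_two)
  exact absurd (Nat.le_of_dvd two_pos h2) (by omega)

theorem xor_add_mod_eq_of_dvd {n α β x x' : ℕ} (h : 2 ^ n ∣ α + β + x + x' + 1) :
    ((α + x) % 2 ^ n) ^^^ ((β + x) % 2 ^ n) = ((α + x') % 2 ^ n) ^^^ ((β + x') % 2 ^ n) := by
  have hN := Nat.two_pow_pos n
  rw [Nat.mod_eq_sub_succ_mod_of_dvd hN (s := α + x') (t := β + x) (by convert h using 1; ring),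
    Nat.mod_eq_sub_succ_mod_of_dvd hN (s := β + x') (t := α + x) (by convert h using 1; ring),
    Nat.two_pow_sub_succ_xor_two_pow_sub_succ (Nat.mod_lt _ hN) (Nat.mod_lt _ hN),
    Nat.xor_comm]

theorem one_query_insufficient_general (n : ℕ) (hn : 2 < n) (α β : ℕ) :
    ∃ x x' : ℕ, x < 2 ^ n ∧ x' < 2 ^ n ∧ x % 2 ^ (n - 1) ≠ x' % 2 ^ (n - 1) ∧
      ((α + x) % 2 ^ n) ^^^ ((β + x) % 2 ^ n) =
        ((α + x') % 2 ^ n) ^^^ ((β + x') % 2 ^ n) := by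
  have hM : 2 < 2 ^ (n - 1) :=
    calc 2 < 2 ^ 2 := by norm_num
      _ ≤ 2 ^ (n - 1) := Nat.pow_le_pow_right two_pos (by omega)
  obtain ⟨x, hx, hndvd⟩ := Nat.exists_lt_two_not_dvd_two_mul_add hM (α + β + 1)
  obtain ⟨x', hx', hdvd⟩ := Nat.exists_lt_dvd_add (2 ^ n) (α + β + x + 1)
  refine ⟨x, x', hx.trans_le (Nat.le_self_pow (by omega) 2), hx', fun hmod => hndvd ?_,
    xor_add_mod_eq_of_dvd (by convert hdvd using 1; ring)⟩
  have hMN : 2 ^ (n - 1) ∣ 2 ^ n := pow_dvd_pow 2 (Nat.sub_le n 1)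
  refine Nat.modEq_zero_iff_dvd.mp ?_
  calc 2 * x + (α + β + 1) = α + β + x + 1 + x := by ring
    _ ≡ α + β + x + 1 + x' [MOD 2 ^ (n - 1)] := Nat.ModEq.add_left _ hmod
    _ ≡ 0 [MOD 2 ^ (n - 1)] := Nat.modEq_zero_iff_dvd.mpr (hMN.trans hdvd)

/-- For every integer `n > 2` and every pair `(α, β)` of `n`-bit integers, a single query
to `x ↦ (α ∔ x) ⊕ (β ∔ x)` cannot determine `x` modulo `2^(n-1)`. -/
theorem one_query_insufficient (n : ℕ) (hn : 2 < n) (α β : ℕ)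
    (hα : α < 2 ^ n) (hβ : β < 2 ^ n) :
    ∃ x x' : ℕ, x < 2 ^ n ∧ x' < 2 ^ n ∧ x % 2 ^ (n - 1) ≠ x' % 2 ^ (n - 1) ∧
      ((α + x) % 2 ^ n) ^^^ ((β + x) % 2 ^ n) =
        ((α + x') % 2 ^ n) ^^^ ((β + x') % 2 ^ n) :=
  one_query_insufficient_general n hn α β
end

section
/- For n = 2, a single query suffices to determine x modulo 2: there exist 2-bit integers α and β (0 ≤ α, β < 4) such that for all 2-bit integers x and x' (0 ≤ x, x' < 4), if ((α + x) mod 4) ⊕ ((β + x) mod 4) = ((α + x') mod 4) ⊕ ((β + x') mod 4), then x mod 2 = x' mod 2. -/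
theorem xor_add_one_mod_four {x : ℕ} (hx : x < 4) : x ^^^ ((x + 1) % 4) = 2 * (x % 2) + 1 := by
  interval_cases x <;> rfl

/-- For `n = 2`, a single query suffices to determine `x` modulo `2`. -/
theorem one_query_suffices_two_bits :
    ∃ α β : ℕ, α < 4 ∧ β < 4 ∧
      ∀ x x' : ℕ, x < 4 → x' < 4 →
        ((α + x) % 4) ^^^ ((β + x) % 4) = ((α + x') % 4) ^^^ ((β + x') % 4) →
        x % 2 = x' % 2 := by
  refine ⟨0, 1, by norm_num, by norm_num, fun x x' hx hx' hquery => ?_⟩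
  rw [zero_add, zero_add, Nat.mod_eq_of_lt hx, Nat.mod_eq_of_lt hx', add_comm 1, add_comm 1,
    xor_add_one_mod_four hx, xor_add_one_mod_four hx'] at hquery
  omega
end

section
/- For n = 8, the two queries (α, β) = (0, 170) and (α, β) = (170, 85) determine x modulo 128: for all integers x and x' with 0 ≤ x, x' < 256, if ((0 + x) mod 256) ⊕ ((170 + x) mod 256) = ((0 + x') mod 256) ⊕ ((170 + x') mod 256) and ((170 + x) mod 256) ⊕ ((85 + x) mod 256) = ((170 + x') mod 256) ⊕ ((85 + x') mod 256), then x mod 128 = x' mod 128. -/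
/-!
Adding `2 ^ 7` to `x` flips bit 7 of both `α + x` and `β + x` modulo `2 ^ 8`, and the two flips
cancel in `(α + x) ⊕ (β + x)`. Hence both observations depend only on `x mod 128`, and it remains
to check that the pair of observations is injective on `[0, 128)`.
-/

def xorDiff (n α β x : ℕ) : ℕ := (α + x) % 2 ^ n ^^^ (β + x) % 2 ^ n

theorem Nat.add_two_pow_mod_two_pow_succ (a n : ℕ) :
    (a + 2 ^ n) % 2 ^ (n + 1) = a % 2 ^ (n + 1) ^^^ 2 ^ n := by
  apply Nat.eq_of_testBit_eq
  intro i
  rw [Nat.testBit_mod_two_pow, Nat.testBit_xor, Nat.testBit_mod_two_pow, Nat.testBit_two_pow,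
    Nat.add_comm a]
  rcases lt_trichotomy i n with hi | rfl | hi
  · simp [Nat.testBit_two_pow_add_gt hi, hi.ne', show i < n + 1 by omega]
  · simp [Nat.testBit_two_pow_add_eq]
  · simp [hi.ne, show ¬ i < n + 1 by omega]

theorem xorDiff_add_two_pow (n α β x : ℕ) :
    xorDiff (n + 1) α β (x + 2 ^ n) = xorDiff (n + 1) α β x := by
  simp only [xorDiff, ← add_assoc, Nat.add_two_pow_mod_two_pow_succ]
  rw [Nat.xor_assoc, Nat.xor_comm (2 ^ n), Nat.xor_assoc, Nat.xor_self, Nat.xor_zero]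

theorem xorDiff_mod_two_pow (n α β x : ℕ) :
    xorDiff (n + 1) α β (x % 2 ^ n) = xorDiff (n + 1) α β x := by
  conv_rhs => rw [← Nat.mod_add_div x (2 ^ n)]
  induction x / 2 ^ n with
  | zero => simp
  | succ k ih => rw [mul_add_one, ← add_assoc, xorDiff_add_two_pow, ih]

set_option maxRecDepth 100000 in
theorem xorDiff_pair_injOn_lt_128 : ∀ r < 128, ∀ r' < 128,
    xorDiff 8 0 170 r = xorDiff 8 0 170 r' → xorDiff 8 170 85 r = xorDiff 8 170 85 r' →
    r = r' := by
  decide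

theorem two_queries_determine_x_mod_128_general (x x' : ℕ)
    (h1 : ((0 + x) % 256) ^^^ ((170 + x) % 256) = ((0 + x') % 256) ^^^ ((170 + x') % 256))
    (h2 : ((170 + x) % 256) ^^^ ((85 + x) % 256) = ((170 + x') % 256) ^^^ ((85 + x') % 256)) :
    x % 128 = x' % 128 := by
  have h1 : xorDiff 8 0 170 (x % 2 ^ 7) = xorDiff 8 0 170 (x' % 2 ^ 7) := by
    rw [xorDiff_mod_two_pow, xorDiff_mod_two_pow]
    exact h1
  have h2 : xorDiff 8 170 85 (x % 2 ^ 7) = xorDiff 8 170 85 (x' % 2 ^ 7) := by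
    rw [xorDiff_mod_two_pow, xorDiff_mod_two_pow]
    exact h2
  exact xorDiff_pair_injOn_lt_128 _ (Nat.mod_lt _ (by norm_num)) _ (Nat.mod_lt _ (by norm_num))
    h1 h2

/-- For `n = 8`, the two queries `(α, β) = (0, 170)` and `(α, β) = (170, 85)` determine
`x` modulo `128`. -/
theorem two_queries_determine_x_mod_128 (x x' : ℕ) (hx : x < 256) (hx' : x' < 256)
    (h1 : ((0 + x) % 256) ^^^ ((170 + x) % 256) = ((0 + x') % 256) ^^^ ((170 + x') % 256))
    (h2 : ((170 + x) % 256) ^^^ ((85 + x) % 256) = ((170 + x') % 256) ^^^ ((85 + x') % 256)) :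
    x % 128 = x' % 128 :=
  two_queries_determine_x_mod_128_general x x' h1 h2
end

section
/- The function y = (α ∔ x) ⊕ (β ∔ x) is invariant under flipping the most significant bit of x: for every integer n ≥ 1 and all integers α, β, x with 0 ≤ α, β, x < 2^n, one has (α ∔ (x ⊕ 2^(n-1))) ⊕ (β ∔ (x ⊕ 2^(n-1))) = (α ∔ x) ⊕ (β ∔ x). -/
/-!
Modulo `2 ^ (k + 1)`, flipping bit `k` and adding `2 ^ k` are the same operation, since the
carry out of bit `k` is discarded. Hence replacing `x` by `x ^^^ 2 ^ k` flips bit `k` of both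
`α ∔ x` and `β ∔ x`, and the two flips cancel in their xor.
-/

namespace Nat

theorem add_two_pow_mod_two_pow_succ_s5 (m k : ℕ) :
    (m + 2 ^ k) % 2 ^ (k + 1) = (m ^^^ 2 ^ k) % 2 ^ (k + 1) := by
  refine eq_of_testBit_eq fun i => ?_
  rw [testBit_mod_two_pow, testBit_mod_two_pow, testBit_xor, add_comm m, testBit_two_pow]
  rcases lt_trichotomy i k with hi | rfl | hi
  · simp [testBit_two_pow_add_gt hi, hi.ne']
  · simp [testBit_two_pow_add_eq]
  · simp [show ¬i < k + 1 by omega]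

theorem add_xor_two_pow_mod_two_pow_succ (a x k : ℕ) :
    (a + (x ^^^ 2 ^ k)) % 2 ^ (k + 1) = (a + x) % 2 ^ (k + 1) ^^^ 2 ^ k := by
  calc (a + (x ^^^ 2 ^ k)) % 2 ^ (k + 1)
      = (a + (x + 2 ^ k) % 2 ^ (k + 1)) % 2 ^ (k + 1) := by
        rw [add_two_pow_mod_two_pow_succ_s5, add_mod_mod]
    _ = ((a + x) ^^^ 2 ^ k) % 2 ^ (k + 1) := by
        rw [add_mod_mod, ← add_assoc, add_two_pow_mod_two_pow_succ_s5]
    _ = (a + x) % 2 ^ (k + 1) ^^^ 2 ^ k := by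
        rw [xor_mod_two_pow, mod_eq_of_lt (pow_lt_pow_right₀ one_lt_two k.lt_succ_self)]

end Nat

theorem query_invariant_msb_flip_general (n : ℕ) (hn : 1 ≤ n) (α β x : ℕ) :
    ((α + (x ^^^ 2 ^ (n - 1))) % 2 ^ n) ^^^ ((β + (x ^^^ 2 ^ (n - 1))) % 2 ^ n) =
      ((α + x) % 2 ^ n) ^^^ ((β + x) % 2 ^ n) := by
  obtain ⟨k, rfl⟩ : ∃ k, n = k + 1 := ⟨n - 1, by omega⟩
  rw [Nat.add_sub_cancel, Nat.add_xor_two_pow_mod_two_pow_succ,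
    Nat.add_xor_two_pow_mod_two_pow_succ, Nat.xor_assoc, xor_xor_cancel_comm_assoc]

/-- `(α ∔ x) ⊕ (β ∔ x)` is invariant under flipping the most significant bit of `x`. -/
theorem query_invariant_msb_flip (n : ℕ) (hn : 1 ≤ n) (α β x : ℕ)
    (hα : α < 2 ^ n) (hβ : β < 2 ^ n) (hx : x < 2 ^ n) :
    ((α + (x ^^^ 2 ^ (n - 1))) % 2 ^ n) ^^^ ((β + (x ^^^ 2 ^ (n - 1))) % 2 ^ n) =
      ((α + x) % 2 ^ n) ^^^ ((β + x) % 2 ^ n) :=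
  query_invariant_msb_flip_general n hn α β x
end

section
/- For the chosen plain-image with constant channel values 0, 170 and 85, the consecutive ciphertext XOR differences yield exactly the two query values needed to recover X(i): let (X(i))_{i≥1}, (Y(i))_{i≥1}, (Z(i))_{i≥1} be sequences of 8-bit integers and define R'(0) = G'(0) = B'(0) = 0 and, for i ≥ 1, R'(i) = ( ((rot(0) + X(i)) mod 256) ⊕ Y(i) ) ⊕ R'(i−1) ⊕ Z(i), G'(i) = ( ((rot(170) + X(i)) mod 256) ⊕ Y(i) ) ⊕ G'(i−1) ⊕ Z(i), and B'(i) = ( ((rot(85) + X(i)) mod 256) ⊕ Y(i) ) ⊕ B'(i−1) ⊕ Z(i). Then for every i ≥ 1, R'(i) ⊕ R'(i−1) ⊕ G'(i) ⊕ G'(i−1) = ((0 + X(i)) mod 256) ⊕ ((170 + X(i)) mod 256), and G'(i) ⊕ G'(i−1) ⊕ B'(i) ⊕ B'(i−1) = ((170 + X(i)) mod 256) ⊕ ((85 + X(i)) mod 256). -/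
def rot (a : ℕ) : ℕ := 16 * (a % 16) + a / 16

/-- `17 * k` is the byte whose two nibbles both equal `k`, e.g. `170 = 0xAA`, `85 = 0x55`. -/
theorem rot_seventeen_mul {k : ℕ} (hk : k < 16) : rot (17 * k) = 17 * k := by
  unfold rot
  omega

theorem xor_chained_diff_eq (u v y z a b : ℕ) :
    ((u ^^^ y) ^^^ a ^^^ z) ^^^ a ^^^ ((v ^^^ y) ^^^ b ^^^ z) ^^^ b = u ^^^ v := by
  calc _ = (u ^^^ v) ^^^ (y ^^^ y) ^^^ (a ^^^ a) ^^^ (b ^^^ b) ^^^ (z ^^^ z) := by ac_rfl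
    _ = u ^^^ v := by simp only [Nat.xor_self, Nat.xor_zero]

theorem chosen_plaintext_queries_general (X Y Z R' G' B' : ℕ → ℕ)
    (hR : ∀ i, 1 ≤ i → R' i = (((rot 0 + X i) % 256) ^^^ Y i) ^^^ R' (i - 1) ^^^ Z i)
    (hG : ∀ i, 1 ≤ i → G' i = (((rot 170 + X i) % 256) ^^^ Y i) ^^^ G' (i - 1) ^^^ Z i)
    (hB : ∀ i, 1 ≤ i → B' i = (((rot 85 + X i) % 256) ^^^ Y i) ^^^ B' (i - 1) ^^^ Z i) :
    ∀ i, 1 ≤ i →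
      (R' i) ^^^ (R' (i - 1)) ^^^ (G' i) ^^^ (G' (i - 1)) =
          ((0 + X i) % 256) ^^^ ((170 + X i) % 256) ∧
      (G' i) ^^^ (G' (i - 1)) ^^^ (B' i) ^^^ (B' (i - 1)) =
          ((170 + X i) % 256) ^^^ ((85 + X i) % 256) := by
  intro i hi
  rw [hR i hi, hG i hi, hB i hi, rot_seventeen_mul (k := 0) (by norm_num),
    rot_seventeen_mul (k := 10) (by norm_num), rot_seventeen_mul (k := 5) (by norm_num)]
  exact ⟨xor_chained_diff_eq .., xor_chained_diff_eq ..⟩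

/-- For the chosen plain-image with constant channel values 0, 170 and 85, the consecutive
ciphertext XOR differences yield exactly the two query values needed to recover `X(i)`. -/
theorem chosen_plaintext_queries (X Y Z R' G' B' : ℕ → ℕ)
    (hX : ∀ i, 1 ≤ i → X i < 256) (hY : ∀ i, 1 ≤ i → Y i < 256)
    (hZ : ∀ i, 1 ≤ i → Z i < 256)
    (hR0 : R' 0 = 0) (hG0 : G' 0 = 0) (hB0 : B' 0 = 0)
    (hR : ∀ i, 1 ≤ i → R' i = (((rot 0 + X i) % 256) ^^^ Y i) ^^^ R' (i - 1) ^^^ Z i)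
    (hG : ∀ i, 1 ≤ i → G' i = (((rot 170 + X i) % 256) ^^^ Y i) ^^^ G' (i - 1) ^^^ Z i)
    (hB : ∀ i, 1 ≤ i → B' i = (((rot 85 + X i) % 256) ^^^ Y i) ^^^ B' (i - 1) ^^^ Z i) :
    ∀ i, 1 ≤ i →
      (R' i) ^^^ (R' (i - 1)) ^^^ (G' i) ^^^ (G' (i - 1)) =
          ((0 + X i) % 256) ^^^ ((170 + X i) % 256) ∧
      (G' i) ^^^ (G' (i - 1)) ^^^ (B' i) ^^^ (B' (i - 1)) =
          ((170 + X i) % 256) ^^^ ((85 + X i) % 256) :=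
  chosen_plaintext_queries_general X Y Z R' G' B' hR hG hB
end

section
/- The combined diffusion keystream pair (X, W) is equivalent to (X ⊕ 128, W ⊕ 128): for all integers a, X, W with 0 ≤ a, X, W < 256, one has ( ((rot(a) + (X ⊕ 128)) mod 256) ⊕ (W ⊕ 128) ) = ( ((rot(a) + X) mod 256) ⊕ W ). -/
namespace Nat

theorem xor_two_pow_modEq_add (t n : ℕ) : t ^^^ 2 ^ n ≡ t + 2 ^ n [MOD 2 ^ (n + 1)] := by
  refine eq_of_testBit_eq fun i => ?_
  simp only [testBit_mod_two_pow, testBit_xor, testBit_two_pow, add_comm t]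
  rcases lt_trichotomy i n with hin | rfl | hni
  · simp [testBit_two_pow_add_gt hin, hin.ne', hin.trans (lt_succ_self n)]
  · simp [testBit_two_pow_add_eq]
  · simp [hni.ne, not_lt.2 (succ_le_of_lt hni)]

theorem add_xor_two_pow_mod (r x n : ℕ) :
    (r + (x ^^^ 2 ^ n)) % 2 ^ (n + 1) = (r + x) % 2 ^ (n + 1) ^^^ 2 ^ n := by
  have hlt : (r + x) % 2 ^ (n + 1) ^^^ 2 ^ n < 2 ^ (n + 1) :=
    xor_lt_two_pow (mod_lt _ (by positivity)) (pow_lt_pow_right₀ one_lt_two (lt_succ_self n))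
  have h : r + (x ^^^ 2 ^ n) ≡ (r + x) % 2 ^ (n + 1) ^^^ 2 ^ n [MOD 2 ^ (n + 1)] :=
    calc r + (x ^^^ 2 ^ n) ≡ r + (x + 2 ^ n) [MOD 2 ^ (n + 1)] :=
          (xor_two_pow_modEq_add x n).add_left r
      _ = (r + x) + 2 ^ n := by ring
      _ ≡ (r + x) % 2 ^ (n + 1) + 2 ^ n [MOD 2 ^ (n + 1)] := (mod_modEq _ _).symm.add_right _
      _ ≡ (r + x) % 2 ^ (n + 1) ^^^ 2 ^ n [MOD 2 ^ (n + 1)] := (xor_two_pow_modEq_add _ n).symm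
  rw [← mod_eq_of_lt hlt]
  exact h

end Nat

theorem keystream_equivalence_general (a X W : ℕ) :
    ((rot a + (X ^^^ 128)) % 256) ^^^ (W ^^^ 128) = ((rot a + X) % 256) ^^^ W := by
  have key : (rot a + (X ^^^ 128)) % 256 = (rot a + X) % 256 ^^^ 128 :=
    Nat.add_xor_two_pow_mod (rot a) X 7
  rw [key, Nat.xor_comm W, ← Nat.xor_assoc, Nat.xor_assoc _ 128 128, Nat.xor_self, Nat.xor_zero]

/-- The combined diffusion keystream pair `(X, W)` is equivalent to `(X ⊕ 128, W ⊕ 128)`. -/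
theorem keystream_equivalence (a X W : ℕ) (ha : a < 256) (hX : X < 256) (hW : W < 256) :
    ((rot a + (X ^^^ 128)) % 256) ^^^ (W ^^^ 128) = ((rot a + X) % 256) ^^^ W :=
  keystream_equivalence_general a X W
end

section
/- The ciphertext of the chosen plain-image with constant channel values 0, 170 and 85 determines the keystream X(i) modulo 128: let (X(i))_{i≥1}, (Y(i))_{i≥1}, (Z(i))_{i≥1} and (X'(i))_{i≥1}, (Y'(i))_{i≥1}, (Z'(i))_{i≥1} be sequences of 8-bit integers, and for each keystream triple define R'(0) = G'(0) = B'(0) = 0 and, for i ≥ 1, R'(i) = ( ((rot(0) + X(i)) mod 256) ⊕ Y(i) ) ⊕ R'(i−1) ⊕ Z(i), G'(i) = ( ((rot(170) + X(i)) mod 256) ⊕ Y(i) ) ⊕ G'(i−1) ⊕ Z(i), B'(i) = ( ((rot(85) + X(i)) mod 256) ⊕ Y(i) ) ⊕ B'(i−1) ⊕ Z(i), and similarly R''(i), G''(i), B''(i) from (X'(i), Y'(i), Z'(i)). If R'(i) = R''(i), G'(i) = G''(i) and B'(i) = B''(i) for all i ≥ 1, then X(i) mod 128 = X'(i) mod 128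 for all i ≥ 1. -/
theorem Nat.xor_xor_xor_cancel_right (a b w : ℕ) : a ^^^ w ^^^ (b ^^^ w) = a ^^^ b := by
  rw [Nat.xor_comm b, ← Nat.xor_assoc, Nat.xor_xor_cancel_right]

theorem Nat.xor_eq_xor_of_xor_xor_eq {a b y z a' b' y' z' : ℕ}
    (ha : a ^^^ y ^^^ z = a' ^^^ y' ^^^ z') (hb : b ^^^ y ^^^ z = b' ^^^ y' ^^^ z') :
    a ^^^ b = a' ^^^ b' := by
  have h := congrArg₂ (· ^^^ ·) ha hb
  rwa [Nat.xor_assoc a, Nat.xor_assoc b, Nat.xor_assoc a', Nat.xor_assoc b',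
    Nat.xor_xor_xor_cancel_right, Nat.xor_xor_xor_cancel_right] at h

theorem mask_eq_of_chain_eq {E E' Z Z' C C' : ℕ → ℕ} (h0 : C 0 = C' 0)
    (hC : ∀ i, 1 ≤ i → C i = E i ^^^ C (i - 1) ^^^ Z i)
    (hC' : ∀ i, 1 ≤ i → C' i = E' i ^^^ C' (i - 1) ^^^ Z' i)
    (heq : ∀ i, 1 ≤ i → C i = C' i) {i : ℕ} (hi : 1 ≤ i) :
    E i ^^^ Z i = E' i ^^^ Z' i := by
  have hprev : C (i - 1) = C' (i - 1) := by
    rcases Nat.lt_or_ge (i - 1) 1 with h | h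
    · rwa [show i - 1 = 0 by omega]
    · exact heq _ h
  have h := (hC i hi).symm.trans ((heq i hi).trans (hC' i hi))
  rwa [Nat.xor_right_comm, Nat.xor_right_comm (E' i), hprev, Nat.xor_left_inj] at h

def addXorDiff (c a : ℕ) : ℕ := a % 256 ^^^ (c + a) % 256

theorem addXorDiff_mod (c a : ℕ) : addXorDiff c (a % 256) = addXorDiff c a := by
  simp only [addXorDiff, Nat.mod_mod, Nat.add_mod_mod]

/- `a ⊕ (a + c)` is `c` XOR the carries of `a + c`. For `c = 0b10101010` and `c = 0b01010101`, in
one of the two sums the carry into bit `k < 7` differs from `c_k`, and then the carry into bit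
`k + 1` is `a_k`. The carry out of bit 7, which would reveal `a_7`, is lost modulo 256. -/
theorem mod_128_eq_of_addXorDiff_eq_of_lt : ∀ a < 256, ∀ b < 256,
    addXorDiff 170 a = addXorDiff 170 b → addXorDiff 85 a = addXorDiff 85 b →
    a % 128 = b % 128 := by
  decide +kernel

theorem mod_128_eq_of_addXorDiff_eq {a b : ℕ}
    (h170 : addXorDiff 170 a = addXorDiff 170 b) (h85 : addXorDiff 85 a = addXorDiff 85 b) :
    a % 128 = b % 128 := by
  rw [← addXorDiff_mod _ a, ← addXorDiff_mod _ b] at h170 h85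
  have h := mod_128_eq_of_addXorDiff_eq_of_lt _ (Nat.mod_lt a (by norm_num))
    _ (Nat.mod_lt b (by norm_num)) h170 h85
  rwa [Nat.mod_mod_of_dvd _ (by norm_num), Nat.mod_mod_of_dvd _ (by norm_num)] at h

theorem ciphertext_determines_keystream_mod_128_general
    (X Y Z X' Y' Z' R' G' B' R'' G'' B'' : ℕ → ℕ)
    (hR0 : R' 0 = 0) (hG0 : G' 0 = 0) (hB0 : B' 0 = 0)
    (hR0' : R'' 0 = 0) (hG0' : G'' 0 = 0) (hB0' : B'' 0 = 0)
    (hR : ∀ i, 1 ≤ i → R' i = (((rot 0 + X i) % 256) ^^^ Y i) ^^^ R' (i - 1) ^^^ Z i)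
    (hG : ∀ i, 1 ≤ i → G' i = (((rot 170 + X i) % 256) ^^^ Y i) ^^^ G' (i - 1) ^^^ Z i)
    (hB : ∀ i, 1 ≤ i → B' i = (((rot 85 + X i) % 256) ^^^ Y i) ^^^ B' (i - 1) ^^^ Z i)
    (hR' : ∀ i, 1 ≤ i → R'' i = (((rot 0 + X' i) % 256) ^^^ Y' i) ^^^ R'' (i - 1) ^^^ Z' i)
    (hG' : ∀ i, 1 ≤ i → G'' i = (((rot 170 + X' i) % 256) ^^^ Y' i) ^^^ G'' (i - 1) ^^^ Z' i)
    (hB' : ∀ i, 1 ≤ i → B'' i = (((rot 85 + X' i) % 256) ^^^ Y' i) ^^^ B'' (i - 1) ^^^ Z' i)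
    (heqR : ∀ i, 1 ≤ i → R' i = R'' i)
    (heqG : ∀ i, 1 ≤ i → G' i = G'' i)
    (heqB : ∀ i, 1 ≤ i → B' i = B'' i) :
    ∀ i, 1 ≤ i → X i % 128 = X' i % 128 := by
  intro i hi
  have hmR := mask_eq_of_chain_eq (hR0.trans hR0'.symm) hR hR' heqR hi
  have hmG := mask_eq_of_chain_eq (hG0.trans hG0'.symm) hG hG' heqG hi
  have hmB := mask_eq_of_chain_eq (hB0.trans hB0'.symm) hB hB' heqB hi
  obtain ⟨hrot0, hrot170, hrot85⟩ : rot 0 = 0 ∧ rot 170 = 170 ∧ rot 85 = 85 := by decide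
  simp only [hrot0, Nat.zero_add] at hmR
  rw [hrot170] at hmG
  rw [hrot85] at hmB
  exact mod_128_eq_of_addXorDiff_eq (Nat.xor_eq_xor_of_xor_xor_eq hmR hmG)
    (Nat.xor_eq_xor_of_xor_xor_eq hmR hmB)

/-- The ciphertext of the chosen plain-image with constant channel values 0, 170 and 85
determines the keystream `X(i)` modulo 128. -/
theorem ciphertext_determines_keystream_mod_128
    (X Y Z X' Y' Z' R' G' B' R'' G'' B'' : ℕ → ℕ)
    (hX : ∀ i, 1 ≤ i → X i < 256) (hY : ∀ i, 1 ≤ i → Y i < 256)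
    (hZ : ∀ i, 1 ≤ i → Z i < 256)
    (hX' : ∀ i, 1 ≤ i → X' i < 256) (hY' : ∀ i, 1 ≤ i → Y' i < 256)
    (hZ' : ∀ i, 1 ≤ i → Z' i < 256)
    (hR0 : R' 0 = 0) (hG0 : G' 0 = 0) (hB0 : B' 0 = 0)
    (hR0' : R'' 0 = 0) (hG0' : G'' 0 = 0) (hB0' : B'' 0 = 0)
    (hR : ∀ i, 1 ≤ i → R' i = (((rot 0 + X i) % 256) ^^^ Y i) ^^^ R' (i - 1) ^^^ Z i)
    (hG : ∀ i, 1 ≤ i → G' i = (((rot 170 + X i) % 256) ^^^ Y i) ^^^ G' (i - 1) ^^^ Z i)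
    (hB : ∀ i, 1 ≤ i → B' i = (((rot 85 + X i) % 256) ^^^ Y i) ^^^ B' (i - 1) ^^^ Z i)
    (hR' : ∀ i, 1 ≤ i → R'' i = (((rot 0 + X' i) % 256) ^^^ Y' i) ^^^ R'' (i - 1) ^^^ Z' i)
    (hG' : ∀ i, 1 ≤ i → G'' i = (((rot 170 + X' i) % 256) ^^^ Y' i) ^^^ G'' (i - 1) ^^^ Z' i)
    (hB' : ∀ i, 1 ≤ i → B'' i = (((rot 85 + X' i) % 256) ^^^ Y' i) ^^^ B'' (i - 1) ^^^ Z' i)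
    (heqR : ∀ i, 1 ≤ i → R' i = R'' i)
    (heqG : ∀ i, 1 ≤ i → G' i = G'' i)
    (heqB : ∀ i, 1 ≤ i → B' i = B'' i) :
    ∀ i, 1 ≤ i → X i % 128 = X' i % 128 :=
  ciphertext_determines_keystream_mod_128_general X Y Z X' Y' Z' R' G' B' R'' G'' B'' hR0 hG0 hB0
    hR0' hG0' hB0' hR hG hB hR' hG' hB' heqR heqG heqB
end
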